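/- Let L > 0 and μ > 0, and let β₁(μ) ∈ (0, π) be the smallest positive root of cot(β) = (β² − μ²L²)/(2Lβμ). Then β₁(μ) → π as μ → ∞; consequently the first Robin eigenvalue λ(μ) = β₁(μ)²/L² converges to the first Dirichlet eigenvalue π²/L² as μ → ∞. -/

import Mathlib

open Real Filter Set

/-! A root `b ∈ (0, π)` of `cot b = (b² - μ²L²)/(2Lbμ)` makes the right-hand side at most
`π/(2Lμ) - μL/(2π)`, which tends to `-∞` as `μ → ∞`. Since `cot` is decreasing on `(0, π)`,
`cot b` can only be that negative if `b` is close to `π`. -/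

theorem cos_div_sin_antitoneOn : AntitoneOn (fun x => cos x / sin x) (Ioo 0 π) := by
  intro b ⟨hb0, hbπ⟩ c ⟨hc0, hcπ⟩ hbc
  rw [div_le_div_iff₀ (sin_pos_of_pos_of_lt_pi hc0 hcπ) (sin_pos_of_pos_of_lt_pi hb0 hbπ)]
  have h := sin_nonneg_of_nonneg_of_le_pi (sub_nonneg.2 hbc) (by linarith)
  rw [sin_sub] at h
  linarith

theorem robin_rhs_lt {L μ b : ℝ} (hL : 0 < L) (hμ : 0 < μ) (hb0 : 0 < b) (hbπ : b < π) :
    (b ^ 2 - μ ^ 2 * L ^ 2) / (2 * L * b * μ) < π / (2 * L * μ) - μ * L / (2 * π) := by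
  have hsplit : (b ^ 2 - μ ^ 2 * L ^ 2) / (2 * L * b * μ) = b / (2 * L * μ) - μ * L / (2 * b) := by
    field_simp
  rw [hsplit]
  gcongr

theorem tendsto_robin_rhs_bound_atBot {L : ℝ} (hL : 0 < L) :
    Tendsto (fun μ => π / (2 * L * μ) - μ * L / (2 * π)) atTop atBot := by
  have hfirst : Tendsto (fun μ => π / (2 * L * μ)) atTop (nhds 0) := by
    simp_rw [mul_comm (2 * L)]
    exact tendsto_const_nhds.div_atTop (tendsto_id.atTop_mul_const (by positivity))
  have hsecond : Tendsto (fun μ => μ * L / (2 * π)) atTop atTop := by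
    simp_rw [mul_div_assoc]
    exact tendsto_id.atTop_mul_const (by positivity)
  simpa [sub_eq_add_neg] using hfirst.add_atBot (tendsto_neg_atTop_atBot.comp hsecond)

theorem eventually_lt_of_robin_root {L : ℝ} (hL : 0 < L) {β : ℝ → ℝ}
    (hβ : ∀ μ : ℝ, 0 < μ → 0 < β μ ∧ β μ < π ∧
      cos (β μ) / sin (β μ) = (β μ ^ 2 - μ ^ 2 * L ^ 2) / (2 * L * β μ * μ))
    {c : ℝ} (hc0 : 0 < c) (hcπ : c < π) :
    ∀ᶠ μ in atTop, c < β μ := by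
  filter_upwards [eventually_gt_atTop 0,
    (tendsto_robin_rhs_bound_atBot hL).eventually_lt_atBot (cos c / sin c)] with μ hμ hbound
  obtain ⟨hb0, hbπ, hroot⟩ := hβ μ hμ
  by_contra! hbc
  have hcot := cos_div_sin_antitoneOn ⟨hb0, hbπ⟩ ⟨hc0, hcπ⟩ hbc
  linarith [robin_rhs_lt hL hμ hb0 hbπ]

/-- If β₁(μ) ∈ (0, π) is the smallest positive root of cot β = (β² - μ²L²)/(2Lβμ), then
β₁(μ) → π as μ → ∞, and hence the first Robin eigenvalue λ(μ) = β₁(μ)²/L² converges to the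
first Dirichlet eigenvalue π²/L². -/
theorem first_robin_root_tendsto_pi (L : ℝ) (hL : 0 < L) (β : ℝ → ℝ)
    (hβ : ∀ μ : ℝ, 0 < μ →
      IsLeast {b : ℝ | 0 < b ∧
        Real.cos b / Real.sin b = (b^2 - μ^2 * L^2) / (2 * L * b * μ)} (β μ) ∧ β μ < π) :
    Tendsto β atTop (nhds π) ∧
    Tendsto (fun μ => (β μ)^2 / L^2) atTop (nhds (π^2 / L^2)) := by
  have hroot : ∀ μ : ℝ, 0 < μ → 0 < β μ ∧ β μ < π ∧
      cos (β μ) / sin (β μ) = (β μ ^ 2 - μ ^ 2 * L ^ 2) / (2 * L * β μ * μ) := fun μ hμ =>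
    ⟨(hβ μ hμ).1.1.1, (hβ μ hμ).2, (hβ μ hμ).1.1.2⟩
  have hlim : Tendsto β atTop (nhds π) := by
    refine tendsto_order.2 ⟨fun a ha => ?_, fun a ha => ?_⟩
    · have hc : max a (π / 2) < π := max_lt ha (by linarith [pi_pos])
      exact (eventually_lt_of_robin_root hL hroot (by positivity) hc).mono
        fun μ h => (le_max_left _ _).trans_lt h
    · filter_upwards [eventually_gt_atTop 0] with μ hμ using (hβ μ hμ).2.trans ha
  exact ⟨hlim, (hlim.pow 2).div_const _⟩
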